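/- Let M > 0, μ > 0, and Q with 0 ≤ Q ≤ M²μ²/2. Set ℓ* = (2/√3)√(Q + M²μ²) and define z₊ = Q / [(3/4)ℓ*² + √((9/16)ℓ*⁴ - (ℓ*² Q)/2 + Q²)]. Then z₊ is an increasing function of Q on [0, M²μ²/2], z₊ = 0 at Q = 0, and z₊ = 3 - 2√2 at Q = M²μ²/2. -/

import Mathlib

/-!
Since `(3/4) ℓ*² = Q + c` with `c = M²μ²`, the radicand becomes `(4/3)Q² + (4/3)Qc + c²`, and
dividing numerator and denominator by `Q > 0` gives `1 / z₊ = 1 + t + √(t² + (4/3)t + 4/3)` with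
`t = c / Q`. This is increasing in `t`, and `t` decreases in `Q`, so `z₊` increases in `Q`.
At `Q = c / 2`, i.e. `t = 2`, one gets `1 / z₊ = 3 + 2√2`, whose inverse is `3 - 2√2`.
-/

open Real Set

noncomputable section

/-- `z₊` at `ℓ = ℓ*(Q)`, written with `c = M²μ²`. -/
def zPlus (c Q : ℝ) : ℝ := Q / (Q + c + √((4 / 3) * Q ^ 2 + (4 / 3) * Q * c + c ^ 2))

/-- `1 / z₊` as a function of `t = c / Q`. -/
def zPlusInv (t : ℝ) : ℝ := 1 + t + √(t ^ 2 + (4 / 3) * t + 4 / 3)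

end

lemma zPlus_eq_of_sq_eq {ℓ c Q : ℝ} (hℓ : ℓ ^ 2 = (4 / 3) * (Q + c)) :
    Q / ((3 / 4) * ℓ ^ 2 + √((9 / 16) * ℓ ^ 4 - ℓ ^ 2 * Q / 2 + Q ^ 2)) = zPlus c Q := by
  have hℓ4 : ℓ ^ 4 = ((4 / 3) * (Q + c)) ^ 2 := by rw [← hℓ]; ring
  rw [zPlus, hℓ, hℓ4]
  ring_nf

lemma zPlus_zero (c : ℝ) : zPlus c 0 = 0 := by
  simp [zPlus]

lemma zPlus_pos {c Q : ℝ} (hc : 0 ≤ c) (hQ : 0 < Q) : 0 < zPlus c Q :=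
  div_pos hQ (by positivity)

lemma zPlusInv_pos {t : ℝ} (ht : 0 ≤ t) : 0 < zPlusInv t := by
  unfold zPlusInv; positivity

lemma zPlusInv_strictMonoOn : StrictMonoOn zPlusInv (Ici 0) := by
  intro s (hs : 0 ≤ s) t _ hst
  have : s ^ 2 + (4 / 3) * s + 4 / 3 ≤ t ^ 2 + (4 / 3) * t + 4 / 3 := by nlinarith
  have := Real.sqrt_le_sqrt this
  unfold zPlusInv
  linarith

lemma zPlus_eq_one_div_zPlusInv {c Q : ℝ} (hQ : 0 < Q) :
    zPlus c Q = 1 / zPlusInv (c / Q) := by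
  have hrad : (4 / 3) * Q ^ 2 + (4 / 3) * Q * c + c ^ 2
      = Q ^ 2 * ((c / Q) ^ 2 + (4 / 3) * (c / Q) + 4 / 3) := by
    field_simp
    ring
  have hdenom : Q + c + √((4 / 3) * Q ^ 2 + (4 / 3) * Q * c + c ^ 2) = Q * zPlusInv (c / Q) := by
    rw [hrad, Real.sqrt_mul (sq_nonneg Q), Real.sqrt_sq hQ.le, zPlusInv]
    field_simp
  rw [zPlus, hdenom, div_mul_cancel_left₀ hQ.ne', one_div]

lemma zPlus_strictMonoOn {c : ℝ} (hc : 0 < c) : StrictMonoOn (zPlus c) (Ici 0) := by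
  intro a (ha : 0 ≤ a) b (hb : 0 ≤ b) hab
  have hb_pos : 0 < b := ha.trans_lt hab
  rcases ha.eq_or_lt with rfl | ha_pos
  · rw [zPlus_zero]
    exact zPlus_pos hc.le hb_pos
  rw [zPlus_eq_one_div_zPlusInv ha_pos, zPlus_eq_one_div_zPlusInv hb_pos]
  have hcb : 0 ≤ c / b := div_nonneg hc.le hb
  exact one_div_lt_one_div_of_lt (zPlusInv_pos hcb)
    (zPlusInv_strictMonoOn hcb (div_nonneg hc.le ha) (div_lt_div_of_pos_left hc ha_pos hab))

lemma zPlusInv_two : zPlusInv 2 = 3 + 2 * √2 := by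
  have h8 : √8 = 2 * √2 := by
    rw [show (8 : ℝ) = 2 ^ 2 * 2 by norm_num, Real.sqrt_mul (by norm_num), Real.sqrt_sq (by norm_num)]
  rw [zPlusInv]
  norm_num [h8]

lemma zPlus_half_self {c : ℝ} (hc : 0 < c) : zPlus c (c / 2) = 3 - 2 * √2 := by
  have hsq : (3 + 2 * √2) * (3 - 2 * √2) = 1 := by
    nlinarith [Real.sq_sqrt (show (0 : ℝ) ≤ 2 by norm_num)]
  rw [zPlus_eq_one_div_zPlusInv (by positivity), div_div_cancel₀ hc.ne', zPlusInv_two,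
    one_div, inv_eq_of_mul_eq_one_right hsq]

/-- The ISSO polar bound z₊ = cos²θ_min as a function of the Carter constant Q
(with ℓ = ℓ*(Q)) is strictly increasing on [0, M²μ²/2], vanishes at Q = 0,
and equals 3 - 2√2 at Q = M²μ²/2. -/
theorem isso_polar_bound_monotone
    (M μ : ℝ) (hM : M > 0) (hμ : μ > 0)
    (lstar : ℝ → ℝ)
    (hlstar : ∀ Q : ℝ, lstar Q = (2 / Real.sqrt 3) * Real.sqrt (Q + M ^ 2 * μ ^ 2))
    (zp : ℝ → ℝ)
    (hzp : ∀ Q : ℝ, zp Q = Q / ((3 / 4) * (lstar Q) ^ 2 +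
        Real.sqrt ((9 / 16) * (lstar Q) ^ 4 - (lstar Q) ^ 2 * Q / 2 + Q ^ 2))) :
    StrictMonoOn zp (Set.Icc 0 (M ^ 2 * μ ^ 2 / 2)) ∧
    zp 0 = 0 ∧
    zp (M ^ 2 * μ ^ 2 / 2) = 3 - 2 * Real.sqrt 2 := by
  set c := M ^ 2 * μ ^ 2
  have hc : 0 < c := by positivity
  have hzp_eq : EqOn (zPlus c) zp (Ici 0) := by
    intro Q (hQ : 0 ≤ Q)
    have hℓ : lstar Q ^ 2 = (4 / 3) * (Q + c) := by
      rw [hlstar, mul_pow, div_pow, Real.sq_sqrt (by norm_num), Real.sq_sqrt (by positivity)]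
      ring
    rw [hzp, zPlus_eq_of_sq_eq hℓ]
  refine ⟨((zPlus_strictMonoOn hc).congr hzp_eq).mono Icc_subset_Ici_self, ?_, ?_⟩
  · rw [← hzp_eq self_mem_Ici, zPlus_zero]
  · rw [← hzp_eq (show 0 ≤ c / 2 by positivity), zPlus_half_self hc]
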